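/- The polynomial X^4 + X^3 - 4X^2 - 3X + 9 is irreducible over the rational numbers, and if K denotes the number field obtained by adjoining a root of this polynomial to the rationals, then in the polynomial ring K[X] the sextic (X^2 - X + 1)(X^4 + X^3 - 4X^2 - 3X + 9) factors as a product (X - a)(X - b) q_1(X) q_2(X) for some elements a, b of K and some monic quadratic polynomials q_1, q_2 in K[X]. -/

import Mathlib

open Polynomial

private instance : Fact (Nat.Prime 5) := ⟨by norm_num⟩

private lemma monic_quad_eq {R : Type*} [CommSemiring R] {p : R[X]} (hm : p.Monic)
    (h2 : p.natDegree = 2) : p = X ^ 2 + C (p.coeff 1) * X + C (p.coeff 0) := by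
  have h3 : p.natDegree < 3 := by omega
  have hc2 : p.coeff 2 = 1 := by
    have := hm.coeff_natDegree
    rwa [h2] at this
  conv_lhs => rw [p.as_sum_range' 3 h3]
  simp only [Finset.sum_range_succ, Finset.sum_range_zero, zero_add, hc2,
    ← C_mul_X_pow_eq_monomial, map_one, one_mul, pow_zero, pow_one, mul_one]
  ring

private lemma no_root_zmod5 : ∀ x : ZMod 5, x ^ 4 + x ^ 3 - 4 * x ^ 2 - 3 * x + 9 ≠ 0 := by
  decide

private lemma no_quad_zmod5 :
    ¬ ∃ A B C D : ZMod 5, ∀ x : ZMod 5,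
      x ^ 4 + x ^ 3 - 4 * x ^ 2 - 3 * x + 9 = (x ^ 2 + A * x + B) * (x ^ 2 + C * x + D) := by
  decide

private lemma irred_zmod5 : Irreducible (X ^ 4 + X ^ 3 - 4 * X ^ 2 - 3 * X + 9 : (ZMod 5)[X]) := by
  set p : (ZMod 5)[X] := X ^ 4 + X ^ 3 - 4 * X ^ 2 - 3 * X + 9 with hp
  have hmon : p.Monic := by rw [hp]; monicity!
  have hdeg : p.natDegree = 4 := by rw [hp]; compute_degree!
  -- no monic linear factor
  have hlin : ∀ g h : (ZMod 5)[X], g.Monic → g.natDegree = 1 → p ≠ g * h := by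
    intro g h hg h1 heq
    rw [hg.eq_X_add_C h1] at heq
    have he := congrArg (eval (-(g.coeff 0))) heq
    rw [hp] at he
    simp only [eval_add, eval_sub, eval_mul, eval_pow, eval_X, eval_C, eval_ofNat] at he
    rw [neg_add_cancel, zero_mul] at he
    exact no_root_zmod5 (-(g.coeff 0)) he
  constructor
  · intro h
    have := natDegree_eq_zero_of_isUnit h
    omega
  · intro a b hab
    by_contra hcon
    push_neg at hcon
    obtain ⟨ha, hb⟩ := hcon
    have hp0 : p ≠ 0 := hmon.ne_zero
    have ha0 : a ≠ 0 := by rintro rfl; rw [zero_mul] at hab; exact hp0 hab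
    have hb0 : b ≠ 0 := by rintro rfl; rw [mul_zero] at hab; exact hp0 hab
    have hla : a.leadingCoeff ≠ 0 := leadingCoeff_ne_zero.mpr ha0
    have hlb : b.leadingCoeff ≠ 0 := leadingCoeff_ne_zero.mpr hb0
    set a' := a * C (a.leadingCoeff)⁻¹ with ha'
    set b' := b * C (b.leadingCoeff)⁻¹ with hb'
    have hma : a'.Monic := by rw [ha']; exact monic_mul_leadingCoeff_inv ha0
    have hmb : b'.Monic := by rw [hb']; exact monic_mul_leadingCoeff_inv hb0
    have hl1 : a.leadingCoeff * b.leadingCoeff = 1 := by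
      rw [← leadingCoeff_mul, ← hab]; exact hmon
    have hab' : p = a' * b' := by
      rw [ha', hb', hab]
      rw [mul_mul_mul_comm, ← C_mul, ← mul_inv, hl1, inv_one, C_1, mul_one]
    have hdsum : a'.natDegree + b'.natDegree = 4 := by
      rw [← natDegree_mul hma.ne_zero hmb.ne_zero, ← hab', hdeg]
    have hua : a'.natDegree ≠ 0 := by
      intro h0
      have : a' = 1 := hma.natDegree_eq_zero.mp h0
      apply ha
      have : a * C (a.leadingCoeff)⁻¹ = 1 := by rw [← ha', this]
      exact IsUnit.of_mul_eq_one _ this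
    have hub : b'.natDegree ≠ 0 := by
      intro h0
      have : b' = 1 := hmb.natDegree_eq_zero.mp h0
      apply hb
      have : b * C (b.leadingCoeff)⁻¹ = 1 := by rw [← hb', this]
      exact IsUnit.of_mul_eq_one _ this
    have hcase : a'.natDegree = 1 ∨ a'.natDegree = 2 ∨ a'.natDegree = 3 := by omega
    rcases hcase with h1 | h2 | h3
    · exact hlin a' b' hma h1 hab'
    · have hb2 : b'.natDegree = 2 := by omega
      have ea := monic_quad_eq hma h2
      have eb := monic_quad_eq hmb hb2
      have key : ∀ x : ZMod 5,
          x ^ 4 + x ^ 3 - 4 * x ^ 2 - 3 * x + 9 =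
            (x ^ 2 + a'.coeff 1 * x + a'.coeff 0) * (x ^ 2 + b'.coeff 1 * x + b'.coeff 0) := by
        intro x
        have he := congrArg (eval x) hab'
        rw [hp, ea, eb] at he
        simpa only [eval_add, eval_sub, eval_mul, eval_pow, eval_X, eval_C, eval_ofNat] using he
      exact no_quad_zmod5 ⟨_, _, _, _, key⟩
    · have hb1 : b'.natDegree = 1 := by omega
      exact hlin b' a' hmb hb1 (by rw [hab', mul_comm])

private lemma irred_int : Irreducible (X ^ 4 + X ^ 3 - 4 * X ^ 2 - 3 * X + 9 : ℤ[X]) := by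
  have hmZ : (X ^ 4 + X ^ 3 - 4 * X ^ 2 - 3 * X + 9 : ℤ[X]).Monic := by monicity!
  apply hmZ.irreducible_of_irreducible_map (Int.castRingHom (ZMod 5))
  have hmap5 : (X ^ 4 + X ^ 3 - 4 * X ^ 2 - 3 * X + 9 : ℤ[X]).map (Int.castRingHom (ZMod 5)) =
      X ^ 4 + X ^ 3 - 4 * X ^ 2 - 3 * X + 9 := by
    simp only [Polynomial.map_add, Polynomial.map_sub, Polynomial.map_mul, Polynomial.map_pow,
      Polynomial.map_X, Polynomial.map_ofNat]
  rw [hmap5]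
  exact irred_zmod5

private lemma irred_rat : Irreducible (X ^ 4 + X ^ 3 - 4 * X ^ 2 - 3 * X + 9 : ℚ[X]) := by
  have hmZ : (X ^ 4 + X ^ 3 - 4 * X ^ 2 - 3 * X + 9 : ℤ[X]).Monic := by monicity!
  have h := (IsPrimitive.Int.irreducible_iff_irreducible_map_cast hmZ.isPrimitive).mp irred_int
  have hmap : (X ^ 4 + X ^ 3 - 4 * X ^ 2 - 3 * X + 9 : ℤ[X]).map (Int.castRingHom ℚ) =
      X ^ 4 + X ^ 3 - 4 * X ^ 2 - 3 * X + 9 := by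
    simp only [Polynomial.map_add, Polynomial.map_sub, Polynomial.map_mul, Polynomial.map_pow,
      Polynomial.map_X, Polynomial.map_ofNat]
  rwa [hmap] at h

set_option maxHeartbeats 1000000 in
/-- The quartic `X⁴ + X³ - 4X² - 3X + 9` is irreducible over `ℚ`, and over the number
field `K` obtained by adjoining one of its roots, the hyperelliptic sextic
`(X² - X + 1)(X⁴ + X³ - 4X² - 3X + 9)` of `X₀(147)*` factors as a product of two linear
factors and two monic quadratics. -/
theorem X0_147_star_sextic_factorization :
    Irreducible (X ^ 4 + X ^ 3 - 4 * X ^ 2 - 3 * X + 9 : ℚ[X]) ∧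
    ∃ (a b : AdjoinRoot (X ^ 4 + X ^ 3 - 4 * X ^ 2 - 3 * X + 9 : ℚ[X]))
      (q₁ q₂ : Polynomial (AdjoinRoot (X ^ 4 + X ^ 3 - 4 * X ^ 2 - 3 * X + 9 : ℚ[X]))),
      q₁.Monic ∧ q₁.degree = 2 ∧ q₂.Monic ∧ q₂.degree = 2 ∧
      Polynomial.map
          (algebraMap ℚ (AdjoinRoot (X ^ 4 + X ^ 3 - 4 * X ^ 2 - 3 * X + 9 : ℚ[X])))
          ((X ^ 2 - X + 1) * (X ^ 4 + X ^ 3 - 4 * X ^ 2 - 3 * X + 9)) =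
        (X - C a) * (X - C b) * q₁ * q₂ := by
  haveI : Fact (Irreducible (X ^ 4 + X ^ 3 - 4 * X ^ 2 - 3 * X + 9 : ℚ[X])) := ⟨irred_rat⟩
  set θ : AdjoinRoot (X ^ 4 + X ^ 3 - 4 * X ^ 2 - 3 * X + 9 : ℚ[X]) :=
    AdjoinRoot.root (X ^ 4 + X ^ 3 - 4 * X ^ 2 - 3 * X + 9 : ℚ[X]) with hθdef
  have hθ : θ ^ 4 + θ ^ 3 - 4 * θ ^ 2 - 3 * θ + 9 = 0 := by
    have h0 := AdjoinRoot.eval₂_root (X ^ 4 + X ^ 3 - 4 * X ^ 2 - 3 * X + 9 : ℚ[X])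
    simpa using h0
  set b : AdjoinRoot (X ^ 4 + X ^ 3 - 4 * X ^ 2 - 3 * X + 9 : ℚ[X]) :=
    -(1 + θ / 3 - θ ^ 2 / 3 - θ ^ 3 / 3) - θ with hbdef
  set v : AdjoinRoot (X ^ 4 + X ^ 3 - 4 * X ^ 2 - 3 * X + 9 : ℚ[X]) :=
    -θ / 3 + θ ^ 2 / 3 + θ ^ 3 / 3 with hvdef
  have h1 : θ + b = v - 1 := by rw [hbdef, hvdef]; ring
  have h2 : θ * b = -3 := by
    rw [hbdef]
    linear_combination (1 / 3 : AdjoinRoot (X ^ 4 + X ^ 3 - 4 * X ^ 2 - 3 * X + 9 : ℚ[X])) * hθ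
  have h3 : v - v ^ 2 = 2 := by
    rw [hvdef]
    linear_combination (-2 / 9 - θ / 9 - θ ^ 2 / 9 :
      AdjoinRoot (X ^ 4 + X ^ 3 - 4 * X ^ 2 - 3 * X + 9 : ℚ[X])) * hθ
  refine ⟨irred_rat, θ, b, X ^ 2 - X + 1, X ^ 2 + C v * X - 3, ?_, ?_, ?_, ?_, ?_⟩
  · monicity!
  · compute_degree!
  · monicity!
  · compute_degree!
  · have H1 : (C θ + C b : Polynomial (AdjoinRoot (X ^ 4 + X ^ 3 - 4 * X ^ 2 - 3 * X + 9 : ℚ[X]))) =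
        C v - 1 := by
      rw [← C_add, h1, map_sub, map_one]
    have H2 : (C θ * C b : Polynomial (AdjoinRoot (X ^ 4 + X ^ 3 - 4 * X ^ 2 - 3 * X + 9 : ℚ[X]))) =
        -3 := by
      rw [← C_mul, h2, map_neg, map_ofNat]
    have H3 : (C v - C v ^ 2 : Polynomial (AdjoinRoot (X ^ 4 + X ^ 3 - 4 * X ^ 2 - 3 * X + 9 : ℚ[X]))) =
        2 := by
      rw [← C_pow, ← C_sub, h3, map_ofNat]
    simp only [Polynomial.map_mul, Polynomial.map_add, Polynomial.map_sub, Polynomial.map_pow,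
      Polynomial.map_X, Polynomial.map_ofNat, Polynomial.map_one]
    linear_combination ((X ^ 2 - X + 1) * X * (X ^ 2 + C v * X - 3)) * H1 -
      ((X ^ 2 - X + 1) * (X ^ 2 + C v * X - 3)) * H2 - ((X ^ 2 - X + 1) * X ^ 2) * H3
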